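/- arXiv:2503.07132 — 8 statements merged into one kernel-verified Lean document; each statement's English description precedes it below -/
import Mathlib

section
/- For all non-negative integers n, q, t, s, p with n ≥ s and q ≥ 1, and every sequence x ∈ A_q^n, the size of the t-insertion s-deletion p-substitution ball satisfies |B_{t,s,p}(x)| ≥ Σ_{i=0}^{t+p} C(n+t-s, i) (q-1)^i. -/
/-- The subsequence of `x` indexed by the finite set `S` of size `m`,
entries taken in increasing index order. -/
def subseqOf {q n m : ℕ} (x : Fin n → Fin q) (S : Finset (Fin n)) (h : S.card = m) :
    Fin m → Fin q :=
  fun i => x ((S.orderIsoOfFin h i : Fin n))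

/-- The insertion/deletion/substitution ball of `x ∈ A_q^n`: all sequences `z` of
length `m` such that some subsequence of `x` of length `n - s` is within Hamming
distance `p` of some subsequence of `z` of the same length.  For the `t`-insertion
`s`-deletion `p`-substitution ball `B_{t,s,p}(x)`, take `m = n + t - s`. -/
def idsBall (q s p : ℕ) {n m : ℕ} (x : Fin n → Fin q) : Set (Fin m → Fin q) :=
  { z | ∃ (S1 : Finset (Fin n)) (S2 : Finset (Fin m))
      (h1 : S1.card = n - s) (h2 : S2.card = n - s),
      hammingDist (subseqOf x S1 h1) (subseqOf z S2 h2) ≤ p }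

/-!
Put `m = n + t - s` and pad `x` to a word `u : ℕ → A_q`. Every `z ∈ A_q^m` containing the
length-`(m - t)` prefix of `u` as a subsequence up to `p` substitutions lies in the ball. These
words are counted by induction on `m`, splitting on the first letter `a` of `z`: `a = u 0` is
matched with `u 0`, and each of the `q - 1` other letters is read as an insertion while `t > 0`
and as a substitution once `t = 0`. Either way the budget `t + p` drops by one, so the count obeys
Pascal's rule `V(m+1, r+1) = V(m, r+1) + (q-1) V(m, r)` of the Hamming-ball volume
`V(m, r) = ∑_{i ≤ r} C(m, i) (q-1)^i`.
-/

open Finset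

def hammingBallVolume (q m r : ℕ) : ℕ := ∑ i ∈ range (r + 1), m.choose i * (q - 1) ^ i

lemma hammingBallVolume_zero_left (q r : ℕ) : hammingBallVolume q 0 r = 1 := by
  simp [hammingBallVolume, sum_range_succ']

lemma hammingBallVolume_zero_right (q m : ℕ) : hammingBallVolume q m 0 = 1 := by
  simp [hammingBallVolume]

lemma hammingBallVolume_succ_succ (q m r : ℕ) :
    hammingBallVolume q (m + 1) (r + 1) =
      hammingBallVolume q m (r + 1) + (q - 1) * hammingBallVolume q m r := by
  simp only [hammingBallVolume]
  rw [sum_range_succ' _ (r + 1), sum_range_succ' (fun i => m.choose i * _) (r + 1)]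
  have hshift (i : ℕ) :
      m.choose i * (q - 1) ^ (i + 1) = (q - 1) * (m.choose i * (q - 1) ^ i) := by
    ring
  simp only [Nat.choose_succ_succ, add_mul, sum_add_distrib, mul_sum, hshift,
    Nat.choose_zero_right]
  ring

lemma card_filter_fin_succ_pi {α : Type*} [Fintype α] {m : ℕ}
    (P : (Fin (m + 1) → α) → Prop) [DecidablePred P] :
    #{z | P z} = ∑ a, #{z : Fin m → α | P (Fin.cons a z)} := by
  simp only [card_filter]
  rw [← (Fin.consEquiv fun _ => α).sum_comp, Fintype.sum_prod_type]
  rfl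

variable {α : Type*} [DecidableEq α]

lemma hammingDist_cons {k : ℕ} (a b : α) (x y : Fin k → α) :
    hammingDist (Fin.cons a x : Fin (k + 1) → α) (Fin.cons b y) =
      hammingDist x y + if a = b then 0 else 1 := by
  simp only [hammingDist, card_filter, Fin.sum_univ_succ, Fin.cons_zero, Fin.cons_succ]
  split_ifs <;> simp_all [add_comm]

def PrefixNearSubseq (u : ℕ → α) (k p : ℕ) {m : ℕ} (z : Fin m → α) : Prop :=
  ∃ g : Fin k → Fin m, StrictMono g ∧ hammingDist (fun i : Fin k => u i) (z ∘ g) ≤ p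

namespace PrefixNearSubseq

lemma zero_length (u : ℕ → α) (p : ℕ) {m : ℕ} (z : Fin m → α) :
    PrefixNearSubseq u 0 p z :=
  ⟨Fin.elim0, fun i => i.elim0,
    (hammingDist_eq_zero.2 (Subsingleton.elim _ _)).trans_le p.zero_le⟩

variable {u : ℕ → α} {m k p t : ℕ} {z : Fin m → α}

lemma cons_insert (a : α) (hz : PrefixNearSubseq u k p z) :
    PrefixNearSubseq u k p (Fin.cons a z : Fin (m + 1) → α) := by
  obtain ⟨g, hg, hd⟩ := hz
  exact ⟨Fin.succ ∘ g, Fin.strictMono_succ.comp hg, hd⟩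

lemma cons_align (a : α) (hz : PrefixNearSubseq (fun j => u (j + 1)) k p z) :
    PrefixNearSubseq u (k + 1) (p + if u 0 = a then 0 else 1)
      (Fin.cons a z : Fin (m + 1) → α) := by
  obtain ⟨g, hg, hd⟩ := hz
  refine ⟨Fin.cons 0 (Fin.succ ∘ g), Fin.strictMono_cons.2 ⟨fun j => Fin.succ_pos _,
    Fin.strictMono_succ.comp hg⟩, ?_⟩
  have hu : (fun i : Fin (k + 1) => u i) = Fin.cons (u 0) (fun i : Fin k => u (i + 1)) := by
    funext i; cases i using Fin.cases <;> rfl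
  have hzg :
      (Fin.cons a z : Fin (m + 1) → α) ∘ Fin.cons 0 (Fin.succ ∘ g) =
        Fin.cons a (z ∘ g) := by
    funext i; cases i using Fin.cases <;> rfl
  rw [hu, hzg, hammingDist_cons]
  exact Nat.add_le_add_right hd _

lemma cons_head (hz : PrefixNearSubseq (fun j => u (j + 1)) (m - t) p z) :
    PrefixNearSubseq u (m + 1 - t) p (Fin.cons (u 0) z : Fin (m + 1) → α) := by
  rcases le_or_gt t m with htm | hmt
  · rw [show m + 1 - t = m - t + 1 by omega]
    simpa using hz.cons_align (u 0)
  · rw [show m + 1 - t = 0 by omega]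
    exact zero_length u p _

end PrefixNearSubseq

open scoped Classical in
theorem hammingBallVolume_le_card_prefixNearSubseq [Fintype α] (u : ℕ → α) (m t p : ℕ) :
    hammingBallVolume (Fintype.card α) m (t + p) ≤
      #{z : Fin m → α | PrefixNearSubseq u (m - t) p z} := by
  induction m generalizing u t p with
  | zero =>
    rw [hammingBallVolume_zero_left, one_le_card]
    exact ⟨Fin.elim0, mem_filter.2 ⟨mem_univ _,
      by simpa using PrefixNearSubseq.zero_length u p _⟩⟩
  | succ m ih =>
    have hmono {P Q : (Fin m → α) → Prop} (h : ∀ z, P z → Q z) :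
        #{z | P z} ≤ #{z | Q z} :=
      card_le_card (monotone_filter_right _ fun z _ => h z)
    rw [card_filter_fin_succ_pi, ← add_sum_erase _ _ (mem_univ (u 0))]
    have hhead : hammingBallVolume (Fintype.card α) m (t + p) ≤
        #{z : Fin m → α | PrefixNearSubseq u (m + 1 - t) p (Fin.cons (u 0) z)} :=
      (ih _ t p).trans (hmono fun _ => .cons_head)
    rcases htp : t + p with _ | r
    · calc hammingBallVolume (Fintype.card α) (m + 1) 0
          = hammingBallVolume (Fintype.card α) m (t + p) := by
            rw [htp, hammingBallVolume_zero_right, hammingBallVolume_zero_right]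
        _ ≤ _ := hhead.trans (Nat.le_add_right _ _)
    · have htail : ∀ a ∈ univ.erase (u 0), hammingBallVolume (Fintype.card α) m r ≤
          #{z : Fin m → α | PrefixNearSubseq u (m + 1 - t) p (Fin.cons a z)} := by
        intro a ha
        cases t with
        | succ t =>
          refine (ih u t p).trans_eq' (by rw [show r = t + p by omega]) |>.trans
            (hmono fun _ hz => ?_)
          simpa using hz.cons_insert a
        | zero =>
          refine (ih (fun j => u (j + 1)) 0 r).trans_eq' (by rw [zero_add]) |>.trans
            (hmono fun _ hz => ?_)
          simpa [show p = r + 1 by omega, (ne_of_mem_erase ha).symm] using hz.cons_align a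
      calc hammingBallVolume (Fintype.card α) (m + 1) (r + 1)
          = hammingBallVolume (Fintype.card α) m (t + p) +
              (univ.erase (u 0)).card * hammingBallVolume (Fintype.card α) m r := by
            rw [htp, hammingBallVolume_succ_succ, card_erase_of_mem (mem_univ _), card_univ]
        _ ≤ _ := add_le_add hhead (card_nsmul_le_sum _ _ _ htail)

lemma subseqOf_image {q n k : ℕ} (x : Fin n → Fin q) {g : Fin k → Fin n} (hg : StrictMono g)
    (h : (univ.image g).card = k) : subseqOf x (univ.image g) h = x ∘ g := by
  funext i
  rw [subseqOf, coe_orderIsoOfFin_apply,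
    ← orderEmbOfFin_unique h (fun i => mem_image_of_mem g (mem_univ i)) hg]
  rfl

lemma mem_idsBall_of_prefixNearSubseq {q n m s p : ℕ} {x : Fin n → Fin q} {u : ℕ → Fin q}
    (hu : ∀ i : Fin n, u i = x i) {z : Fin m → Fin q} (hz : PrefixNearSubseq u (n - s) p z) :
    z ∈ idsBall q s p x := by
  obtain ⟨g, hg, hd⟩ := hz
  have hcast : StrictMono (Fin.castLE (n.sub_le s)) := Fin.strictMono_castLE _
  refine ⟨_, _, card_image_of_injective _ hcast.injective |>.trans (card_fin _),
    card_image_of_injective _ hg.injective |>.trans (card_fin _), ?_⟩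
  rw [subseqOf_image x hcast, subseqOf_image z hg]
  convert hd using 2
  funext i
  exact (hu _).symm

theorem min_size_idsBall_general (n q t s p : ℕ) (hq : 1 ≤ q)
    (x : Fin n → Fin q) :
    (idsBall q s p x : Set (Fin (n + t - s) → Fin q)).ncard ≥
      ∑ i ∈ Finset.range (t + p + 1), (n + t - s).choose i * (q - 1) ^ i := by
  classical
  let u : ℕ → Fin q := fun j => if h : j < n then x ⟨j, h⟩ else ⟨0, hq⟩
  have hsub : {z : Fin (n + t - s) → Fin q | PrefixNearSubseq u (n + t - s - t) p z} ⊆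
      idsBall q s p x := fun z hz =>
    mem_idsBall_of_prefixNearSubseq (u := u) (fun i => dif_pos i.isLt)
      (by rwa [show n + t - s - t = n - s by omega] at hz)
  calc ∑ i ∈ range (t + p + 1), (n + t - s).choose i * (q - 1) ^ i
      ≤ #{z : Fin (n + t - s) → Fin q | PrefixNearSubseq u (n + t - s - t) p z} := by
        simpa [hammingBallVolume] using
          hammingBallVolume_le_card_prefixNearSubseq u (n + t - s) t p
    _ = {z : Fin (n + t - s) → Fin q | PrefixNearSubseq u (n + t - s - t) p z}.ncard := by
        rw [← Set.ncard_coe_finset, coe_filter_univ]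
    _ ≤ _ := Set.ncard_le_ncard hsub (Set.toFinite _)

/-- lower bound on the size of the
`t`-insertion `s`-deletion `p`-substitution ball. -/
theorem min_size_idsBall (n q t s p : ℕ) (hsn : s ≤ n) (hq : 1 ≤ q)
    (x : Fin n → Fin q) :
    (idsBall q s p x : Set (Fin (n + t - s) → Fin q)).ncard ≥
      ∑ i ∈ Finset.range (t + p + 1), (n + t - s).choose i * (q - 1) ^ i :=
  min_size_idsBall_general n q t s p hq x
end

section
/- For all non-negative integers n, q, t, s, p with n ≥ s and q ≥ 1, the all-zero sequence 0^n ∈ A_q^n satisfies |B_{t,s,p}(0^n)| = Σ_{i=0}^{t+p} C(n+t-s, i) (q-1)^i. -/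
/-!
Every subsequence of `0ⁿ` is constant zero, so `z` of length `m = n + t - s` lies in the ball
iff some `n - s` positions of `z` carry at most `p` nonzero symbols. The other `t` positions can
absorb up to `t` nonzero symbols, so this happens iff `z` has Hamming weight at most `t + p`:
the ball is the Hamming ball of radius `t + p` around `0ᵐ`.
-/

open Finset

section HammingBall

variable {ι α : Type*} [Fintype ι] [DecidableEq ι] [Fintype α] [DecidableEq α]

lemma filter_disagreementSet_eq_piFinset (x : ι → α) (S : Finset ι) :
    ({z : ι → α | univ.filter (fun j => x j ≠ z j) = S} : Finset (ι → α)) =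
      Fintype.piFinset fun j => if j ∈ S then ({x j}ᶜ : Finset α) else {x j} := by
  ext z
  simp only [mem_filter, mem_univ, true_and, Fintype.mem_piFinset, Finset.ext_iff]
  refine forall_congr' fun j => ?_
  split_ifs with h <;> simp [h, eq_comm]

lemma card_filter_disagreementSet_eq (x : ι → α) (S : Finset ι) :
    #{z : ι → α | univ.filter (fun j => x j ≠ z j) = S} = (Fintype.card α - 1) ^ #S := by
  rw [filter_disagreementSet_eq_piFinset, Fintype.card_piFinset]
  simp only [apply_ite Finset.card, card_compl, card_singleton]
  rw [Fintype.prod_ite_mem, prod_const]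

lemma card_hammingSphere (x : ι → α) (i : ℕ) :
    #{z : ι → α | hammingDist x z = i} =
      (Fintype.card ι).choose i * (Fintype.card α - 1) ^ i := by
  rw [card_eq_sum_card_fiberwise (f := fun z => univ.filter fun j => x j ≠ z j)
    (t := powersetCard i univ) fun z hz => by simpa [hammingDist] using hz]
  calc _ = ∑ S ∈ powersetCard i (univ : Finset ι), (Fintype.card α - 1) ^ i := by
        refine sum_congr rfl fun S hS => ?_
        rw [mem_powersetCard_univ] at hS
        rw [filter_filter, ← hS, ← card_filter_disagreementSet_eq x S]
        congr 1
        exact filter_congr fun z _ => by constructor <;> grind [hammingDist]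
    _ = (Fintype.card ι).choose i * (Fintype.card α - 1) ^ i := by
        rw [sum_const, card_powersetCard, card_univ, smul_eq_mul]

lemma card_hammingBall (x : ι → α) (r : ℕ) :
    #{z : ι → α | hammingDist x z ≤ r} =
      ∑ i ∈ range (r + 1), (Fintype.card ι).choose i * (Fintype.card α - 1) ^ i := by
  rw [card_eq_sum_card_fiberwise (f := hammingDist x) (t := range (r + 1))
    fun z hz => by simpa [Nat.lt_succ_iff] using hz]
  refine sum_congr rfl fun i hi => ?_
  rw [mem_range, Nat.lt_succ_iff] at hi
  rw [filter_filter, ← card_hammingSphere x i]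
  congr 1
  exact filter_congr fun z _ => by constructor <;> grind

end HammingBall

lemma exists_card_eq_card_filter_le_iff {ι : Type*} [Fintype ι] [DecidableEq ι]
    (P : ι → Prop) [DecidablePred P] {k p : ℕ} (hk : k ≤ Fintype.card ι) :
    (∃ S : Finset ι, #S = k ∧ #{j ∈ S | P j} ≤ p) ↔
      #{j | P j} ≤ Fintype.card ι - k + p := by
  constructor
  · rintro ⟨S, hS, hSP⟩
    have hsplit : ({j | P j} : Finset ι) ⊆ {j ∈ S | P j} ∪ Sᶜ := fun j hj => by
      by_cases h : j ∈ S <;> simp_all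
    calc #{j | P j} ≤ #{j ∈ S | P j} + #Sᶜ := (card_le_card hsplit).trans (card_union_le _ _)
      _ ≤ Fintype.card ι - k + p := by rw [card_compl, hS]; omega
  · intro hP
    -- Fill the complement of `S` with as many `P`-positions as it can hold.
    set N : Finset ι := {j | P j}
    obtain ⟨T, hTN, hT⟩ := exists_subset_card_eq (min_le_left #N (Fintype.card ι - k))
    obtain ⟨S, hST, hS⟩ :=
      exists_subset_card_eq (s := Tᶜ) (n := k) (by rw [card_compl, hT]; omega)
    refine ⟨S, hS, ?_⟩
    calc #{j ∈ S | P j} ≤ #(N \ T) := card_le_card fun j hj => by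
          have := hST (mem_filter.mp hj).1
          simp_all [N]
      _ ≤ p := by rw [card_sdiff_of_subset hTN, hT]; omega

lemma subseqOf_const {q n k : ℕ} (a : Fin q) (S : Finset (Fin n)) (h : #S = k) :
    subseqOf (fun _ => a) S h = fun _ => a :=
  rfl

lemma hammingDist_const_subseqOf {q n k : ℕ} (a : Fin q) (z : Fin n → Fin q)
    (S : Finset (Fin n)) (h : #S = k) :
    hammingDist (fun _ => a) (subseqOf z S h) = #{j ∈ S | a ≠ z j} := by
  refine card_bij (fun i _ => (S.orderIsoOfFin h i : Fin n)) ?_ ?_ ?_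
  · intro i hi
    rw [mem_filter] at hi ⊢
    exact ⟨(S.orderIsoOfFin h i).2, hi.2⟩
  · intro i _ i' _ hii'
    exact (S.orderIsoOfFin h).injective (Subtype.ext hii')
  · intro j hj
    rw [mem_filter] at hj
    refine ⟨(S.orderIsoOfFin h).symm ⟨j, hj.1⟩, ?_, by simp⟩
    rw [mem_filter]
    simpa [subseqOf] using hj.2

lemma mem_idsBall_const_iff {q n m s p : ℕ} (a : Fin q) (hm : n - s ≤ m) (z : Fin m → Fin q) :
    z ∈ idsBall q s p (fun _ : Fin n => a) ↔
      hammingDist (fun _ => a) z ≤ m - (n - s) + p := by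
  obtain ⟨S1, -, hS1⟩ := exists_subset_card_eq (s := (univ : Finset (Fin n))) (n := n - s)
    (by simp)
  have key := exists_card_eq_card_filter_le_iff (fun j => a ≠ z j) (k := n - s) (p := p)
    (by rwa [Fintype.card_fin])
  rw [Fintype.card_fin] at key
  refine Iff.trans ?_ key
  simp only [idsBall, Set.mem_ofPred_eq, subseqOf_const, hammingDist_const_subseqOf]
  exact ⟨fun ⟨_, S2, _, h2, hd⟩ => ⟨S2, h2, hd⟩,
    fun ⟨S2, h2, hd⟩ => ⟨S1, S2, hS1, h2, hd⟩⟩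

/-- size of the ball of the all-zero sequence. -/
theorem idsBall_zero_size (n q t s p : ℕ) (hsn : s ≤ n) (hq : 1 ≤ q) :
    (idsBall q s p (fun _ : Fin n => (⟨0, hq⟩ : Fin q)) :
        Set (Fin (n + t - s) → Fin q)).ncard =
      ∑ i ∈ Finset.range (t + p + 1), (n + t - s).choose i * (q - 1) ^ i := by
  have hball : (idsBall q s p (fun _ : Fin n => (⟨0, hq⟩ : Fin q)) :
      Set (Fin (n + t - s) → Fin q)) =
      {z | hammingDist (fun _ => (⟨0, hq⟩ : Fin q)) z ≤ t + p} := by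
    ext z
    rw [Set.mem_ofPred_eq, mem_idsBall_const_iff _ (by omega),
      show n + t - s - (n - s) = t by omega]
  rw [hball, ← coe_filter_univ, Set.ncard_coe_finset, card_hammingBall, Fintype.card_fin,
    Fintype.card_fin]
end

section
/- For all non-negative integers n, q, t with q ≥ 1, and every sequence x ∈ A_q^n, the t-insertion ball satisfies |I_t(x)| = Σ_{i=0}^{t} C(n+t, i) (q-1)^i; in particular this size does not depend on x. -/
open Finset

theorem sum_range_succ_choose_succ_mul_pow {R : Type*} [CommSemiring R] (r : R) (m N : ℕ) :
    ∑ i ∈ range (N + 1), ((m + 1).choose i : R) * r ^ i =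
      ∑ i ∈ range (N + 1), (m.choose i : R) * r ^ i +
        r * ∑ i ∈ range N, (m.choose i : R) * r ^ i := by
  induction N with
  | zero => simp
  | succ N ih =>
    rw [sum_range_succ, ih, sum_range_succ _ (N + 1), sum_range_succ _ N, Nat.choose_succ_succ]
    push_cast
    ring

/-- The truncated subtraction makes this `0` when `m < k`. -/
def supersequenceCount (r k m : ℕ) : ℕ :=
  ∑ i ∈ range (m + 1 - k), m.choose i * r ^ i

theorem supersequenceCount_zero_left (r m : ℕ) : supersequenceCount r 0 m = (r + 1) ^ m := by
  rw [supersequenceCount, add_pow]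
  simp [mul_comm]

theorem supersequenceCount_succ_zero (r k : ℕ) : supersequenceCount r (k + 1) 0 = 0 := by
  simp [supersequenceCount]

theorem supersequenceCount_succ_succ (r k m : ℕ) :
    supersequenceCount r (k + 1) (m + 1) =
      supersequenceCount r k m + r * supersequenceCount r (k + 1) m := by
  unfold supersequenceCount
  rcases Nat.lt_or_ge m k with hmk | hkm
  · simp [show m + 1 - k = 0 by omega, show m + 1 - (k + 1) = 0 by omega]
  · have pascal := sum_range_succ_choose_succ_mul_pow r m (m - k)
    simp only [Nat.cast_id] at pascal
    rw [show m + 1 + 1 - (k + 1) = m - k + 1 by omega, show m + 1 - k = m - k + 1 by omega,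
      show m + 1 - (k + 1) = m - k by omega, pascal]

theorem List.cons_sublist_cons_iff_of_ne {α : Type*} {a b : α} {l₁ l₂ : List α} (h : a ≠ b) :
    (a :: l₁).Sublist (b :: l₂) ↔ (a :: l₁).Sublist l₂ :=
  ⟨Sublist.of_cons_of_ne h, Sublist.cons b⟩

theorem List.ofFn_sublist_ofFn_iff {α : Type*} {n m : ℕ} (x : Fin n → α) (z : Fin m → α) :
    (List.ofFn x).Sublist (List.ofFn z) ↔ ∃ f : Fin n ↪o Fin m, ∀ i, z (f i) = x i := by
  have hx : (ofFn x).length = n := length_ofFn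
  have hz : (ofFn z).length = m := length_ofFn
  rw [sublist_iff_exists_fin_orderEmbedding_get_eq]
  constructor
  · rintro ⟨f, hf⟩
    refine ⟨((Fin.castOrderIso hx.symm).toOrderEmbedding.trans f).trans
      (Fin.castOrderIso hz).toOrderEmbedding, fun i => ?_⟩
    have hfi := hf (Fin.cast hx.symm i)
    simp only [List.get_ofFn] at hfi
    exact hfi.symm
  · rintro ⟨f, hf⟩
    refine ⟨((Fin.castOrderIso hx).toOrderEmbedding.trans f).trans
      (Fin.castOrderIso hz.symm).toOrderEmbedding, fun i => ?_⟩
    simp only [RelEmbedding.trans_apply, OrderIso.coe_toOrderEmbedding, Fin.castOrderIso_apply,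
      List.get_ofFn]
    exact (hf _).symm

section Supersequences

variable {α : Type*} [Fintype α]

theorem card_filter_pi_fin_succ {m : ℕ} (P : (Fin (m + 1) → α) → Prop) [DecidablePred P] :
    #{z | P z} = ∑ b, #{f : Fin m → α | P (Fin.cons b f)} := by
  simp only [card_filter]
  rw [← (Fin.consEquiv fun _ => α).sum_comp, Fintype.sum_prod_type]
  rfl

variable [DecidableEq α]

def supersequences (m : ℕ) (l : List α) : Finset (Fin m → α) :=
  {z | l.Sublist (List.ofFn z)}

theorem card_supersequences_nil (m : ℕ) :
    #(supersequences m ([] : List α)) = Fintype.card α ^ m := by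
  simp [supersequences]

theorem supersequences_zero_cons (a : α) (l : List α) : supersequences 0 (a :: l) = ∅ := by
  simp [supersequences]

theorem card_supersequences_succ_cons (m : ℕ) (a : α) (l : List α) :
    #(supersequences (m + 1) (a :: l)) =
      #(supersequences m l) + (Fintype.card α - 1) * #(supersequences m (a :: l)) := by
  have other_head : ∀ b ∈ ({a}ᶜ : Finset α),
      #{f : Fin m → α | (a :: l).Sublist (List.ofFn (Fin.cons b f))} =
        #(supersequences m (a :: l)) := by
    intro b hb
    have hab : a ≠ b := fun h => by simp [h] at hb
    simp only [List.ofFn_succ, Fin.cons_zero, Fin.cons_succ,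
      List.cons_sublist_cons_iff_of_ne hab]
    rfl
  rw [supersequences, card_filter_pi_fin_succ, Fintype.sum_eq_add_sum_compl a,
    sum_congr rfl other_head, sum_const, card_compl, card_singleton, smul_eq_mul]
  simp only [List.ofFn_succ, Fin.cons_zero, Fin.cons_succ, List.cons_sublist_cons]
  rfl

theorem card_supersequences [Nonempty α] (l : List α) (m : ℕ) :
    #(supersequences m l) = supersequenceCount (Fintype.card α - 1) l.length m := by
  induction l generalizing m with
  | nil =>
    rw [card_supersequences_nil, List.length_nil, supersequenceCount_zero_left,
      Nat.sub_add_cancel Fintype.card_pos]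
  | cons a l ihl =>
    induction m with
    | zero =>
      rw [supersequences_zero_cons, card_empty, List.length_cons, supersequenceCount_succ_zero]
    | succ m ihm =>
      rw [card_supersequences_succ_cons, ihm, ihl, List.length_cons,
        supersequenceCount_succ_succ]

end Supersequences

theorem subseqOf_eq_comp {q n m : ℕ} (x : Fin n → Fin q) (S : Finset (Fin n)) (h : S.card = m) :
    subseqOf x S h = x ∘ S.orderEmbOfFin h :=
  rfl

theorem orderEmbOfFin_univ {n : ℕ} (h : (univ : Finset (Fin n)).card = n) :
    ⇑(univ.orderEmbOfFin h) = id :=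
  (orderEmbOfFin_unique h (fun i => mem_univ i) strictMono_id).symm

theorem mem_idsBall_zero_zero_iff {q n m : ℕ} (x : Fin n → Fin q) (z : Fin m → Fin q) :
    z ∈ idsBall q 0 0 x ↔ ∃ f : Fin n ↪o Fin m, ∀ i, z (f i) = x i := by
  simp only [idsBall, Nat.sub_zero, Nat.le_zero, hammingDist_eq_zero, Set.mem_ofPred_eq]
  constructor
  · rintro ⟨S1, S2, h1, h2, hx⟩
    obtain rfl : S1 = univ := S1.eq_univ_of_card (by simpa using h1)
    rw [subseqOf_eq_comp, orderEmbOfFin_univ] at hx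
    exact ⟨S2.orderEmbOfFin h2, fun i => (congrFun hx i).symm⟩
  · rintro ⟨f, hf⟩
    have hcard : (univ.map f.toEmbedding).card = n := by simp
    refine ⟨univ, univ.map f.toEmbedding, card_fin n, hcard, ?_⟩
    rw [subseqOf_eq_comp, subseqOf_eq_comp, orderEmbOfFin_univ,
      ← orderEmbOfFin_unique' hcard (f := f) (fun i => mem_map_of_mem _ (mem_univ i))]
    exact funext fun i => (hf i).symm

/-- the size of the `t`-insertion ball `I_t(x) = B_{t,0,0}(x)`
is the same for every `x`. -/
theorem insertion_ball_size (n q t : ℕ) (hq : 1 ≤ q) (x : Fin n → Fin q) :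
    (idsBall q 0 0 x : Set (Fin (n + t) → Fin q)).ncard =
      ∑ i ∈ Finset.range (t + 1), (n + t).choose i * (q - 1) ^ i := by
  have : Nonempty (Fin q) := Fin.pos_iff_nonempty.mp hq
  have ball_eq : (idsBall q 0 0 x : Set (Fin (n + t) → Fin q)) =
      supersequences (n + t) (List.ofFn x) := by
    ext z
    simp [supersequences, mem_idsBall_zero_zero_iff, List.ofFn_sublist_ofFn_iff]
  rw [ball_eq, Set.ncard_coe_finset, card_supersequences, List.length_ofFn, Fintype.card_fin,
    supersequenceCount, show n + t + 1 - n = t + 1 by omega]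
end

section
/- For all non-negative integers n, q, t, p with q ≥ 1, t ≥ 1, t + p < n, and every sequence x ∈ A_q^n with more than one run, the strict inequality |B_{t,t,p}(x)| > Σ_{i=0}^{t+p} C(n, i) (q-1)^i holds. -/
open Finset

section Hamming

variable {ι α : Type*} [Fintype ι] [DecidableEq ι] [DecidableEq α]

theorem card_filter_forall_ne_iff_mem [Fintype α] (x : ι → α) (S : Finset ι) :
    #{z : ι → α | ∀ j, z j ≠ x j ↔ j ∈ S} = (Fintype.card α - 1) ^ #S := by
  have hpi : ({z : ι → α | ∀ j, z j ≠ x j ↔ j ∈ S} : Finset (ι → α)) =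
      Fintype.piFinset fun j => if j ∈ S then univ.erase (x j) else {x j} := by
    ext z
    simp only [mem_filter, mem_univ, true_and, Fintype.mem_piFinset]
    refine forall_congr' fun j => ?_
    split_ifs with hj <;> simp [hj]
  rw [hpi, Fintype.card_piFinset]
  simp only [apply_ite card, card_erase_of_mem (mem_univ _), card_univ, card_singleton]
  rw [prod_ite_mem, univ_inter, prod_const]

theorem card_filter_hammingDist_eq [Fintype α] (x : ι → α) (i : ℕ) :
    #{z : ι → α | hammingDist z x = i} =
      (Fintype.card ι).choose i * (Fintype.card α - 1) ^ i := by
  have hmaps : ∀ z ∈ ({z : ι → α | hammingDist z x = i} : Finset (ι → α)),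
      ({j | z j ≠ x j} : Finset ι) ∈ powersetCard i univ :=
    fun z hz => mem_powersetCard.2 ⟨subset_univ _, (mem_filter.1 hz).2⟩
  rw [card_eq_sum_card_fiberwise hmaps, sum_congr rfl fun S hS => ?_, sum_const,
    card_powersetCard, card_univ, smul_eq_mul]
  rw [← (mem_powersetCard.1 hS).2, ← card_filter_forall_ne_iff_mem x S, filter_filter]
  congr 1
  ext z
  have hdiff : ({j | z j ≠ x j} : Finset ι) = S ↔ ∀ j, z j ≠ x j ↔ j ∈ S := by
    simp [Finset.ext_iff]
  simp only [mem_filter, mem_univ, true_and, ← hdiff]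
  exact ⟨And.right, fun h => ⟨congrArg card h, h⟩⟩

theorem card_filter_hammingDist_le [Fintype α] (x : ι → α) (r : ℕ) :
    #{z : ι → α | hammingDist z x ≤ r} =
      ∑ i ∈ range (r + 1), (Fintype.card ι).choose i * (Fintype.card α - 1) ^ i := by
  rw [card_eq_sum_card_fiberwise (f := fun z => hammingDist z x) (t := range (r + 1))
    (fun z hz => by simpa [Nat.lt_succ_iff] using hz)]
  refine sum_congr rfl fun i hi => ?_
  rw [filter_filter, ← card_filter_hammingDist_eq x i]
  congr 1
  ext z
  simp only [mem_filter, mem_univ, true_and, mem_range] at hi ⊢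
  omega

theorem hammingDist_update_le_one (w : ι → α) (j : ι) (b : α) :
    hammingDist w (Function.update w j b) ≤ 1 := by
  refine (card_le_card fun k hk => ?_).trans (card_singleton j).le
  by_contra hkj
  simp [Function.update_of_ne (Finset.notMem_singleton.1 hkj)] at hk

theorem hammingDist_update_of_eq {w v : ι → α} {j : ι} (hj : w j = v j) {b : α}
    (hb : b ≠ v j) :
    hammingDist (Function.update w j b) v = hammingDist w v + 1 := by
  have hfilter : ({k | Function.update w j b k ≠ v k} : Finset ι) =
      insert j ({k | w k ≠ v k} : Finset ι) := by
    ext k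
    by_cases hkj : k = j
    · subst hkj; simp [hb]
    · simp [hkj]
  rw [hammingDist, hfilter, card_insert_of_notMem (by simp [hj])]
  rfl

theorem exists_hammingDist_le_lt [Nontrivial α] {u v : ι → α} (huv : u ≠ v) {r : ℕ}
    (hr : r < Fintype.card ι) : ∃ w, hammingDist u w ≤ r ∧ r < hammingDist w v := by
  induction r with
  | zero => exact ⟨u, by simp, hammingDist_pos.2 huv⟩
  | succ r ih =>
    obtain ⟨w, huw, hwv⟩ := ih (by omega)
    by_cases hfar : r + 1 < hammingDist w v
    · exact ⟨w, by omega, hfar⟩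
    obtain ⟨j, hj⟩ : ∃ j, w j = v j := by
      by_contra! hne
      have : hammingDist w v = Fintype.card ι := by simp [hammingDist, hne]
      omega
    obtain ⟨b, hb⟩ := exists_ne (v j)
    refine ⟨Function.update w j b, ?_, ?_⟩
    · calc hammingDist u (Function.update w j b)
          ≤ hammingDist u w + hammingDist w (Function.update w j b) := hammingDist_triangle _ _ _
        _ ≤ r + 1 := by grind [hammingDist_update_le_one w j b]
    · rw [hammingDist_update_of_eq hj hb]
      omega

end Hamming

theorem hammingDist_append {α : Type*} [DecidableEq α] {m n : ℕ} (a c : Fin m → α)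
    (b d : Fin n → α) :
    hammingDist (Fin.append a b) (Fin.append c d) = hammingDist a c + hammingDist b d := by
  simp only [hammingDist, card_filter, Fin.sum_univ_add, Fin.append_left, Fin.append_right]

theorem subseqOf_map {q n l : ℕ} (x : Fin n → Fin q) {f : Fin l → Fin n} (hf : StrictMono f)
    (h : (univ.map ⟨f, hf.injective⟩).card = l) : subseqOf x _ h = x ∘ f := by
  funext i
  rw [subseqOf, coe_orderIsoOfFin_apply,
    ← orderEmbOfFin_unique h (fun i => mem_map_of_mem _ (mem_univ i)) hf]
  rfl

theorem mem_idsBall_of_strictMono {q s p n m l : ℕ} {x : Fin n → Fin q} {z : Fin m → Fin q}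
    {f : Fin l → Fin n} {g : Fin l → Fin m} (hl : n - s = l) (hf : StrictMono f)
    (hg : StrictMono g) (h : hammingDist (x ∘ f) (z ∘ g) ≤ p) : z ∈ idsBall q s p x := by
  subst hl
  have hcard : ∀ {k} {e : Fin (n - s) → Fin k} (he : StrictMono e),
      (univ.map ⟨e, he.injective⟩).card = n - s := fun _ => by simp
  exact ⟨_, _, hcard hf, hcard hg, by rwa [subseqOf_map x hf, subseqOf_map z hg]⟩

theorem mem_idsBall_of_hammingDist_le {q s p n : ℕ} (hs : s ≤ n) {x z : Fin n → Fin q}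
    (h : hammingDist x z ≤ s + p) : z ∈ idsBall q s p x := by
  set D : Finset (Fin n) := {j | x j ≠ z j}
  obtain ⟨T₀, hT₀D, hT₀⟩ := exists_subset_card_eq (min_le_right s #D)
  obtain ⟨T, hT₀T, hT⟩ := exists_superset_card_eq (hT₀.trans_le (min_le_left s #D))
    (by simpa using hs)
  have hTc : #Tᶜ = n - s := by rw [card_compl, hT, Fintype.card_fin]
  set e := Tᶜ.orderEmbOfFin hTc
  refine mem_idsBall_of_strictMono rfl e.strictMono e.strictMono ?_
  -- every kept mismatch lies in `D \ T₀`, and `#(D \ T₀) = #D - min s #D ≤ p`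
  calc hammingDist (x ∘ e) (z ∘ e) ≤ #(D \ T₀) := by
        refine card_le_card_of_injOn e (fun i hi => ?_) e.injective.injOn
        rw [mem_coe, mem_filter] at hi
        rw [mem_coe, mem_sdiff, mem_filter]
        exact ⟨⟨mem_univ _, hi.2⟩,
          fun h₀ => mem_compl.1 (orderEmbOfFin_mem _ _ i) (hT₀T h₀)⟩
    _ ≤ p := by
        rw [card_sdiff_of_subset hT₀D, hT₀]
        have : #D ≤ s + p := h
        omega

theorem exists_strictMono_comp_ne {α : Type*} {m t : ℕ} (hm : 0 < m) (ht : 0 < t)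
    {x : Fin (m + t) → α} (hx : ∃ i j, x i ≠ x j) :
    ∃ f : Fin m → Fin (m + t), StrictMono f ∧ x ∘ f ≠ x ∘ Fin.castAdd t := by
  by_contra! H
  -- shifting by `d = min k t ≥ 1` links position `k` to the earlier position `k - d`
  have hconst : ∀ k (j : Fin (m + t)), (j : ℕ) = k → x j = x ⟨0, by omega⟩ := by
    intro k
    induction k using Nat.strong_induction_on with
    | _ k ih =>
      intro j hj
      rcases Nat.eq_zero_or_pos k with rfl | hk
      · exact congrArg x (Fin.ext hj)
      set d := min k t
      set f : Fin m → Fin (m + t) := fun l => ⟨l + d, by omega⟩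
      have hf : StrictMono f := fun a b hab => Fin.mk_lt_mk.2 (Nat.add_lt_add_right hab d)
      have hlt : k - d < m := by omega
      calc x j = x (f ⟨k - d, hlt⟩) := congrArg x (Fin.ext (by simp [f]; omega))
        _ = x (Fin.castAdd t ⟨k - d, hlt⟩) := congrFun (H f hf) _
        _ = x ⟨0, by omega⟩ := ih (k - d) (by omega) _ rfl
  obtain ⟨i, j, hij⟩ := hx
  exact hij ((hconst _ i rfl).trans (hconst _ j rfl).symm)

theorem exists_mem_idsBall_lt_hammingDist {q m t p : ℕ} {x : Fin (m + t) → Fin q}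
    {f : Fin m → Fin (m + t)} (hf : StrictMono f) (hfx : x ∘ f ≠ x ∘ Fin.castAdd t)
    (hp : p < m) : ∃ z ∈ idsBall q t p x, t + p < hammingDist z x := by
  obtain ⟨i, hi⟩ := Function.ne_iff.1 hfx
  have : Nontrivial (Fin q) := nontrivial_of_ne _ _ hi
  obtain ⟨w, hw, hwx⟩ := exists_hammingDist_le_lt hfx (r := p) (by simpa using hp)
  choose y hy using fun l : Fin t => exists_ne (x (Fin.natAdd m l))
  refine ⟨Fin.append w y,
    mem_idsBall_of_strictMono (by omega) hf (Fin.strictMono_castAdd t) ?_, ?_⟩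
  · simpa [Function.comp_def] using hw
  · have htail : hammingDist y (fun l => x (Fin.natAdd m l)) = t := by simp [hammingDist, hy]
    rw [← Fin.append_castAdd_natAdd (f := x), hammingDist_append, htail]
    simp only [Function.comp_def] at hwx
    omega

theorem idsBall_tt_strict_general (n q t p : ℕ) (ht : 1 ≤ t) (htp : t + p < n)
    (x : Fin n → Fin q) (hx : ∃ i j, x i ≠ x j) :
    (idsBall q t p x : Set (Fin n → Fin q)).ncard >
      ∑ i ∈ Finset.range (t + p + 1), n.choose i * (q - 1) ^ i := by
  obtain ⟨m, rfl⟩ : ∃ m, n = m + t := ⟨n - t, by omega⟩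
  have hpm : p < m := by omega
  obtain ⟨f, hf, hfx⟩ := exists_strictMono_comp_ne (Nat.zero_lt_of_lt hpm) ht hx
  obtain ⟨z, hz, hzx⟩ := exists_mem_idsBall_lt_hammingDist hf hfx hpm
  set ball : Finset (Fin (m + t) → Fin q) := {w | hammingDist w x ≤ t + p}
  have hsub : (insert z ball : Set (Fin (m + t) → Fin q)) ⊆ idsBall q t p x := by
    refine Set.insert_subset hz fun w hw => mem_idsBall_of_hammingDist_le (by omega) ?_
    rw [hammingDist_comm]
    exact (mem_filter.1 hw).2
  have hz_notMem : z ∉ ball := by simpa [ball] using hzx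
  calc ∑ i ∈ range (t + p + 1), (m + t).choose i * (q - 1) ^ i
      = #ball := by simpa using (card_filter_hammingDist_le x (t + p)).symm
    _ < #(insert z ball) := by rw [card_insert_of_notMem hz_notMem]; omega
    _ ≤ (idsBall q t p x).ncard := by
        rw [← Set.ncard_coe_finset]; exact Set.ncard_le_ncard (by simpa using hsub)

/-- strict inequality for `B_{t,t,p}(x)` when `x` has
more than one run. -/
theorem idsBall_tt_strict (n q t p : ℕ) (hq : 1 ≤ q) (ht : 1 ≤ t) (htp : t + p < n)
    (x : Fin n → Fin q) (hx : ∃ i j, x i ≠ x j) :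
    (idsBall q t p x : Set (Fin n → Fin q)).ncard >
      ∑ i ∈ Finset.range (t + p + 1), n.choose i * (q - 1) ^ i :=
  idsBall_tt_strict_general n q t p ht htp x hx
end

section
/- For all non-negative integers n, q, t, p with n ≥ t and q ≥ 1, and every x ∈ A_q^n, the Hamming ball of radius t + p around x is contained in the t-insertion t-deletion p-substitution ball: B_{0,0,t+p}(x) ⊆ B_{t,t,p}(x). -/
/-!
Delete the same `t` positions from `x` and from `z`, chosen to cover as many of the positions
where they differ as possible. At most `t + p - t = p` mismatches survive, and they are
substitutions between the two remaining subsequences.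
-/

open Finset

theorem Finset.exists_card_eq_card_sdiff_eq {α : Type*} [Fintype α] [DecidableEq α]
    (D : Finset α) {t : ℕ} (ht : t ≤ Fintype.card α) :
    ∃ T : Finset α, #T = t ∧ #(D \ T) = #D - t := by
  rcases le_total t #D with htD | hDt
  · obtain ⟨T, hTD, rfl⟩ := exists_subset_card_eq htD
    exact ⟨T, rfl, card_sdiff_of_subset hTD⟩
  · obtain ⟨T, hDT, rfl⟩ := exists_superset_card_eq hDt (by simpa using ht)
    exact ⟨T, rfl, by simp [sdiff_eq_empty_iff_subset.mpr hDT, Nat.sub_eq_zero_of_le hDt]⟩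

theorem hammingDist_subseqOf {q n m : ℕ} (x z : Fin n → Fin q) (S : Finset (Fin n))
    (h : #S = m) :
    hammingDist (subseqOf x S h) (subseqOf z S h) = #{i ∈ S | x i ≠ z i} := by
  refine card_nbij (S.orderEmbOfFin h) ?_ (S.orderEmbOfFin h).injective.injOn ?_
  · intro i hi
    simp only [coe_filter, mem_univ, true_and] at hi
    exact mem_filter.mpr ⟨orderEmbOfFin_mem S h i, hi⟩
  · intro j hj
    obtain ⟨hjS, hj⟩ := mem_filter.mp hj
    obtain ⟨i, rfl⟩ : j ∈ Set.range (S.orderEmbOfFin h) := by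
      rwa [range_orderEmbOfFin]
    exact ⟨i, mem_filter.mpr ⟨mem_univ i, hj⟩, rfl⟩

theorem hammingBall_subset_idsBall_general (n q t p : ℕ) (htn : t ≤ n)
    (x : Fin n → Fin q) :
    { z : Fin n → Fin q | hammingDist x z ≤ t + p } ⊆
      (idsBall q t p x : Set (Fin n → Fin q)) := by
  intro z hz
  obtain ⟨T, hT, hdiff⟩ :=
    exists_card_eq_card_sdiff_eq ({i | x i ≠ z i} : Finset (Fin n)) (t := t) (by simpa using htn)
  have hTc : #Tᶜ = n - t := by rw [card_compl, hT, Fintype.card_fin]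
  refine ⟨Tᶜ, Tᶜ, hTc, hTc, ?_⟩
  calc hammingDist (subseqOf x Tᶜ hTc) (subseqOf z Tᶜ hTc)
      = #(({i | x i ≠ z i} : Finset (Fin n)) \ T) := by
        rw [hammingDist_subseqOf]
        congr 1
        ext i
        simp [and_comm]
    _ ≤ p := by
        rw [hdiff]
        exact Nat.sub_le_iff_le_add'.mpr hz

/-- the Hamming ball of radius `t + p` is contained in
`B_{t,t,p}(x)`. -/
theorem hammingBall_subset_idsBall (n q t p : ℕ) (htn : t ≤ n) (hq : 1 ≤ q)
    (x : Fin n → Fin q) :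
    { z : Fin n → Fin q | hammingDist x z ≤ t + p } ⊆
      (idsBall q t p x : Set (Fin n → Fin q)) :=
  hammingBall_subset_idsBall_general n q t p htn x
end

section
/- For all non-negative integers n, q, p with q ≥ 1 and any two distinct sequences u, v ∈ A_q^n, the intersection of their Hamming balls of radius p satisfies |B_{0,0,p}(u) ∩ B_{0,0,p}(v)| ≤ q · Σ_{i=0}^{p-1} C(n-1, i) (q-1)^i. -/
/-!
Choose a coordinate `j` with `u j ≠ v j` and split `z` into `z j` and the remaining `n - 1`
coordinates. Whatever `z j` is, it differs from `u j` or from `v j`, so the rest of `z` lies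
within distance `p - 1` of the rest of `u` or of `v`. Hence each of the `q` fibres over `z j` is
no larger than a Hamming ball of radius `p - 1` in `A_q^(n-1)`, whose size is
`∑_{i < p} C(n-1, i) (q-1)^i`.
-/

open Finset

theorem sum_range_succ_choose_mul_pow (m r x : ℕ) :
    ∑ i ∈ range (r + 1), (m + 1).choose i * x ^ i =
      ∑ i ∈ range (r + 1), m.choose i * x ^ i + x * ∑ i ∈ range r, m.choose i * x ^ i := by
  have shift : ∀ i, m.choose i * x ^ (i + 1) = x * (m.choose i * x ^ i) := fun i => by ring
  rw [sum_range_succ' _ r, sum_range_succ' (fun i => m.choose i * x ^ i) r, mul_sum]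
  simp only [Nat.choose_succ_succ, add_mul, sum_add_distrib, Nat.choose_zero_right, shift]
  ring

theorem card_filter_eq_sum_card_filter_insertNth {β : Type*} [Fintype β] {m : ℕ}
    (j : Fin (m + 1)) (P : (Fin (m + 1) → β) → Prop) [DecidablePred P] :
    #{z | P z} = ∑ a, #{w : Fin m → β | P (j.insertNth a w)} := by
  simp only [card_filter]
  rw [← (Fin.insertNthEquiv (fun _ => β) j).sum_comp, Fintype.sum_prod_type]
  rfl

section

variable {β : Type*} [DecidableEq β] {m : ℕ}

theorem hammingDist_insertNth (c : Fin (m + 1) → β) (j : Fin (m + 1)) (a : β)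
    (w : Fin m → β) :
    hammingDist c (j.insertNth a w) = hammingDist (j.removeNth c) w + if c j = a then 0 else 1 := by
  rw [hammingDist, hammingDist, card_filter, card_filter, Fin.sum_univ_succAbove _ j]
  simp only [Fin.insertNth_apply_same, Fin.insertNth_apply_succAbove, Fin.removeNth, ite_not]
  rw [Nat.add_comm]
  exact congrArg₂ _ (sum_congr rfl fun i _ => by split_ifs <;> simp_all) rfl

theorem hammingDist_removeNth_lt {c : Fin (m + 1) → β} {j : Fin (m + 1)} {a : β}
    {w : Fin m → β} {p : ℕ} (ha : c j ≠ a) (hd : hammingDist c (j.insertNth a w) ≤ p) :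
    hammingDist (j.removeNth c) w < p := by
  rw [hammingDist_insertNth, if_neg ha] at hd
  omega

theorem card_hammingDist_lt [Fintype β] (c : Fin m → β) (p : ℕ) :
    #{z | hammingDist c z < p} = ∑ i ∈ range p, m.choose i * (Fintype.card β - 1) ^ i := by
  induction m generalizing p with
  | zero => cases p <;> simp [Subsingleton.elim _ c, sum_range_succ']
  | succ m ih =>
    rw [card_filter_eq_sum_card_filter_insertNth 0, ← add_sum_erase _ _ (mem_univ (c 0))]
    have off_diagonal : ∀ a ∈ univ.erase (c 0), #{w | hammingDist c (Fin.insertNth 0 a w) < p} =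
        #{w | hammingDist (Fin.removeNth 0 c) w < p - 1} := by
      intro a ha
      simp only [hammingDist_insertNth, if_neg (ne_of_mem_erase ha).symm]
      congr! 2
      omega
    rw [sum_congr rfl off_diagonal]
    simp only [hammingDist_insertNth, if_pos, add_zero, ih, sum_const, smul_eq_mul,
      card_erase_of_mem (mem_univ _), card_univ]
    rcases p with _ | r
    · simp
    · exact (sum_range_succ_choose_mul_pow m r _).symm
end

theorem hammingBall_inter_le_general (n q p : ℕ) (u v : Fin n → Fin q)
    (huv : u ≠ v) :
    (({ z | hammingDist u z ≤ p } ∩ { z | hammingDist v z ≤ p } :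
        Set (Fin n → Fin q))).ncard ≤
      q * ∑ i ∈ Finset.range p, (n - 1).choose i * (q - 1) ^ i := by
  obtain ⟨j, hj⟩ := Function.ne_iff.mp huv
  obtain ⟨m, rfl⟩ : ∃ m, n = m + 1 := Nat.exists_eq_add_one.mpr j.pos
  have fiber_le (a : Fin q) :
      #{w | hammingDist u (j.insertNth a w) ≤ p ∧ hammingDist v (j.insertNth a w) ≤ p} ≤
        #{w | hammingDist (j.removeNth (if a = u j then v else u)) w < p} := by
    refine card_le_card fun w hw => ?_
    simp only [mem_filter_univ] at hw ⊢
    split_ifs with ha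
    · exact hammingDist_removeNth_lt (ha ▸ Ne.symm hj) hw.2
    · exact hammingDist_removeNth_lt (Ne.symm ha) hw.1
  calc _ = #{z : Fin (m + 1) → Fin q | hammingDist u z ≤ p ∧ hammingDist v z ≤ p} := by
        rw [← Set.ncard_coe_finset]; congr; ext; simp
    _ ≤ _ := by
        rw [card_filter_eq_sum_card_filter_insertNth j]
        refine (sum_le_sum fun a _ => fiber_le a).trans_eq ?_
        simp [card_hammingDist_lt]

/-- maximum intersection size of two distinct Hamming balls of
radius `p`. -/
theorem hammingBall_inter_le (n q p : ℕ) (hq : 1 ≤ q) (u v : Fin n → Fin q)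
    (huv : u ≠ v) :
    (({ z | hammingDist u z ≤ p } ∩ { z | hammingDist v z ≤ p } :
        Set (Fin n → Fin q))).ncard ≤
      q * ∑ i ∈ Finset.range p, (n - 1).choose i * (q - 1) ^ i :=
  hammingBall_inter_le_general n q p u v huv
end

section
/- For all non-negative integers n, q, t, p with q ≥ 1, t ≥ 1, 1 ≤ p < n, and every sequence x ∈ A_q^n with more than one run, there exists z ∈ B_{t,0,p}(x) such that z_i ≠ x_i for every i ∈ {1,...,p} and the suffix x_{p+1} x_{p+2} ⋯ x_n is not a subsequence of z_{p+1} z_{p+2} ⋯ z_{n+t}. -/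
open Finset

lemma Fin.val_le_apply_of_strictMono {a : ℕ} {f : Fin a → ℕ} (hf : StrictMono f) (j : Fin a) :
    (j : ℕ) ≤ f j := by
  obtain ⟨j, hj⟩ := j
  induction j with
  | zero => exact Nat.zero_le _
  | succ j ih =>
    exact (ih (by omega)).trans_lt (hf (show (⟨j, by omega⟩ : Fin a) < ⟨j + 1, hj⟩ from
      j.lt_succ_self))

lemma Fin.apply_eq_val_of_strictMono_of_lt {a : ℕ} {f : Fin a → ℕ} (hf : StrictMono f)
    (hlt : ∀ j, f j < a) (j : Fin a) : f j = j :=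
  congrArg Fin.val ((show StrictMono fun i => (⟨f i, hlt i⟩ : Fin a) from hf).apply_eq (x := j))

lemma Nat.exists_last_ne {α : Type*} (X : ℕ → α) (c : α) {n : ℕ}
    (h : ∃ i < n, X i ≠ c) : ∃ k < n, X k ≠ c ∧ ∀ i, k < i → i < n → X i = c := by
  classical
  obtain ⟨i, hi, hXi⟩ := h
  refine ⟨Nat.findGreatest (X · ≠ c) (n - 1), ?_,
    Nat.findGreatest_spec (P := (X · ≠ c)) (m := i) (n := n - 1) (by omega) hXi,
    fun j hj hjn => ?_⟩
  · have := Nat.findGreatest_le (P := (X · ≠ c)) (n - 1)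
    omega
  · by_contra hne
    exact Nat.findGreatest_is_greatest hj (by omega) hne

/-- The position of `x_i` in `z` when one symbol is inserted into `x` at position `s`. -/
def shiftFrom (s i : ℕ) : ℕ := if i < s then i else i + 1

lemma strictMono_shiftFrom (s : ℕ) : StrictMono (shiftFrom s) := by
  intro a b hab
  simp only [shiftFrom]
  split_ifs <;> omega

lemma shiftFrom_le_succ (s i : ℕ) : shiftFrom s i ≤ i + 1 := by
  unfold shiftFrom
  split_ifs <;> omega

lemma mem_idsBall_zero_of_strictMono {q n m p : ℕ} {x : Fin n → Fin q} {z : Fin m → Fin q}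
    {g : Fin n → Fin m} (hg : StrictMono g) (h : hammingDist x (z ∘ g) ≤ p) :
    z ∈ (idsBall q 0 p x : Set (Fin m → Fin q)) := by
  have hcard : (univ.map ⟨g, hg.injective⟩).card = n := by simp
  have hx : subseqOf x univ (card_fin n) = x :=
    funext fun i => congrArg x (orderEmbOfFin univ (card_fin n)).strictMono.apply_eq
  have hz : subseqOf z _ hcard = z ∘ g :=
    funext fun i => congrArg z (congrFun (orderEmbOfFin_unique hcard (by simp) hg).symm i)
  exact ⟨univ, _, card_fin n, hcard, by rwa [hx, hz]⟩

section Witnesses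

variable {α : Type*} {σ : α → α} (X : ℕ → α) {n p : ℕ}

def shiftWitness (σ : α → α) (X : ℕ → α) (n p m : ℕ) : α :=
  if m < p then σ (X m) else if m < n then X (m - 1) else σ (X (n - 1))

lemma shiftWitness_ne_of_lt (hσ : ∀ a, σ a ≠ a) {m : ℕ} (hm : m < p) :
    shiftWitness σ X n p m ≠ X m := by
  rw [shiftWitness, if_pos hm]
  exact hσ _

lemma card_mismatch_shiftWitness_le [DecidableEq α] (hp : 1 ≤ p) :
    #{i ∈ range n | X i ≠ shiftWitness σ X n p (shiftFrom (p - 1) i)} ≤ p := by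
  calc _ ≤ #(insert (n - 1) (range (p - 1))) := card_le_card fun i hi => ?_
    _ ≤ p := (card_insert_le _ _).trans (by simp only [card_range]; omega)
  simp only [mem_filter, mem_range] at hi
  simp only [mem_insert, mem_range]
  by_contra! h
  apply hi.2
  rw [shiftFrom, if_neg (by omega), shiftWitness, if_neg (by omega), if_pos (by omega),
    Nat.add_sub_cancel]

lemma shiftWitness_not_subseq (hσ : ∀ a, σ a ≠ a) (hpn : p < n) {k : ℕ} (hk : p - 1 ≤ k)
    (hkn : k + 1 < n) (hXk : X k ≠ X (k + 1)) (f : Fin (n - p) → ℕ) (hf : StrictMono f) :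
    ¬ ∀ j, shiftWitness σ X n p (p + f j) = X (p + j) := by
  intro hfX
  have hlast : f ⟨n - p - 1, by omega⟩ < n - p := by
    by_contra! h
    have := hfX ⟨n - p - 1, by omega⟩
    dsimp only at h this
    rw [shiftWitness, if_neg (by omega), if_neg (by omega)] at this
    exact hσ _ (this.trans (congrArg X (by omega)))
  have hid := Fin.apply_eq_val_of_strictMono_of_lt hf fun j =>
    (hf.monotone (Fin.mk_le_mk.2 (by omega) : j ≤ ⟨n - p - 1, by omega⟩)).trans_lt hlast
  have hstep := hfX ⟨k + 1 - p, by omega⟩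
  rw [hid, Fin.val_mk, shiftWitness, if_neg (by omega), if_pos (by omega)] at hstep
  exact hXk (by convert hstep using 2 <;> omega)

def swapWitness (σ : α → α) (X : ℕ → α) (c : α) (n p k m : ℕ) : α :=
  if m < k then σ (X m) else if m = k then c else if m = k + 1 then X k
  else if p ≤ m ∧ m + 1 < n then c else σ c

variable {c : α} {k : ℕ}

lemma swapWitness_ne_of_lt (hσ : ∀ a, σ a ≠ a) (hXk : X k ≠ c)
    (hc : ∀ i, k < i → i < n → X i = c) (hpn : p < n) {m : ℕ} (hm : m < p) :
    swapWitness σ X c n p k m ≠ X m := by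
  unfold swapWitness
  split_ifs with h₁ h₂ h₃ h₄
  · exact hσ _
  · subst h₂
    exact hXk.symm
  · subst h₃
    rw [hc (k + 1) (by omega) (by omega)]
    exact hXk
  · omega
  · rw [hc m (by omega) (by omega)]
    exact hσ c

lemma card_mismatch_swapWitness_le [DecidableEq α] (hc : ∀ i, k < i → i < n → X i = c)
    (hkp : k + 2 ≤ p) :
    #{i ∈ range n | X i ≠ swapWitness σ X c n p k (shiftFrom k i)} ≤ p := by
  have hk : k ∈ range (p - 1) := mem_range.2 (by omega)
  calc _ ≤ #(insert (n - 2) (insert (n - 1) ((range (p - 1)).erase k))) :=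
        card_le_card fun i hi => ?_
    _ ≤ #((range (p - 1)).erase k) + 2 :=
        (card_insert_le _ _).trans (Nat.succ_le_succ (card_insert_le _ _))
    _ ≤ p := by rw [card_erase_of_mem hk, card_range]; omega
  simp only [mem_filter, mem_range] at hi
  simp only [mem_insert, mem_erase, mem_range]
  by_contra! h
  apply hi.2
  rcases eq_or_ne i k with rfl | hik
  · rw [shiftFrom, if_neg (lt_irrefl i), swapWitness, if_neg (by omega), if_neg (by omega),
      if_pos rfl]
  · rw [shiftFrom, if_neg (by omega), swapWitness, if_neg (by omega), if_neg (by omega),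
      if_neg (by omega), if_pos ⟨by omega, by omega⟩, hc i (by omega) hi.1]

lemma swapWitness_not_subseq (hσ : ∀ a, σ a ≠ a) (hc : ∀ i, k < i → i < n → X i = c)
    (hkp : k + 2 ≤ p) (hpn : p < n) (f : Fin (n - p) → ℕ) (hf : StrictMono f) :
    ¬ ∀ j, swapWitness σ X c n p k (p + f j) = X (p + j) := by
  intro hfX
  have hle := Fin.val_le_apply_of_strictMono hf ⟨n - p - 1, by omega⟩
  have hlast := hfX ⟨n - p - 1, by omega⟩
  dsimp only at hle hlast
  rw [swapWitness, if_neg (by omega), if_neg (by omega), if_neg (by omega), if_neg (by omega),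
    hc _ (by omega) (by omega)] at hlast
  exact hσ c hlast

end Witnesses

theorem exists_no_preimage_elem_of_nat_witness {n q t p : ℕ} (ht : 1 ≤ t) (hpn : p < n)
    (X Z : ℕ → Fin q) (s : ℕ) (hball : #{i ∈ range n | X i ≠ Z (shiftFrom s i)} ≤ p)
    (hpre : ∀ m < p, Z m ≠ X m)
    (hsuf : ∀ f : Fin (n - p) → ℕ, StrictMono f → ¬ ∀ j, Z (p + f j) = X (p + j)) :
    ∃ z ∈ (idsBall q 0 p (fun i : Fin n => X i) : Set (Fin (n + t) → Fin q)),
      (∀ i : ℕ, ∀ hi : i < p, z ⟨i, by omega⟩ ≠ X i) ∧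
      ¬ ∃ (S : Finset (Fin (n + t - p))) (h : S.card = n - p),
          subseqOf (fun j : Fin (n + t - p) =>
              z ⟨p + j.val, by have := j.isLt; omega⟩) S h =
            (fun j : Fin (n - p) => X (p + j.val)) := by
  let g : Fin n → Fin (n + t) := fun i =>
    ⟨shiftFrom s i, by have := shiftFrom_le_succ s i; omega⟩
  refine ⟨fun j => Z j, mem_idsBall_zero_of_strictMono (g := g)
    (fun a b hab => strictMono_shiftFrom s hab) ?_, hpre, ?_⟩
  · refine (card_le_card_of_injOn Fin.val (fun i hi => ?_) Fin.val_injective.injOn).trans hball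
    exact mem_coe.2 (mem_filter.2 ⟨mem_range.2 i.isLt, (mem_filter.1 (mem_coe.1 hi)).2⟩)
  · rintro ⟨S, h, heq⟩
    exact hsuf (fun j => (S.orderIsoOfFin h j : Fin (n + t - p)))
      (Fin.val_strictMono.comp (S.orderEmbOfFin h).strictMono) fun j => congrFun heq j

/-- there is `z ∈ B_{t,0,p}(x)` differing from `x` on the first
`p` positions such that `x_{[p+1,n]}` is not a subsequence of
`z_{[p+1,n+t]}`. -/
theorem exists_no_preimage_elem (n q t p : ℕ) (ht : 1 ≤ t) (hp : 1 ≤ p)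
    (hpn : p < n) (x : Fin n → Fin q) (hx : ∃ i j, x i ≠ x j) :
    ∃ z ∈ (idsBall q 0 p x : Set (Fin (n + t) → Fin q)),
      (∀ i : ℕ, ∀ hi : i < p, z ⟨i, by omega⟩ ≠ x ⟨i, by omega⟩) ∧
      ¬ ∃ (S : Finset (Fin (n + t - p))) (h : S.card = n - p),
          subseqOf (fun j : Fin (n + t - p) =>
              z ⟨p + j.val, by have := j.isLt; omega⟩) S h =
            (fun j : Fin (n - p) => x ⟨p + j.val, by have := j.isLt; omega⟩) := by
  obtain ⟨X, rfl⟩ : ∃ X : ℕ → Fin q, x = fun i : Fin n => X i :=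
    ⟨fun m => if h : m < n then x ⟨m, h⟩ else x ⟨0, by omega⟩, funext fun i => by simp⟩
  obtain ⟨i, j, hij⟩ := hx
  have : Nontrivial (Fin q) := nontrivial_of_ne _ _ hij
  obtain ⟨σ, hσ⟩ : ∃ σ : Fin q → Fin q, ∀ a, σ a ≠ a :=
    ⟨_, fun a => (exists_ne a).choose_spec⟩
  have hnc : ∃ i < n, X i ≠ X (n - 1) := by
    by_cases hi : X i = X (n - 1)
    · exact ⟨j, j.isLt, fun hj => hij (hi.trans hj.symm)⟩
    · exact ⟨i, i.isLt, hi⟩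
  obtain ⟨k, hkn, hXk, hc⟩ := Nat.exists_last_ne X _ hnc
  rcases le_or_gt (p - 1) k with hk | hk
  · have hkn' : k + 1 < n := by
      by_contra! h
      exact hXk (congrArg X (by omega))
    exact exists_no_preimage_elem_of_nat_witness ht hpn X _ _
      (card_mismatch_shiftWitness_le X hp) (fun m => shiftWitness_ne_of_lt X hσ)
      (shiftWitness_not_subseq X hσ hpn hk hkn' (by rwa [hc (k + 1) (by omega) hkn']))
  · exact exists_no_preimage_elem_of_nat_witness ht hpn X _ _
      (card_mismatch_swapWitness_le X hc (by omega))
      (fun m => swapWitness_ne_of_lt X hσ hXk hc hpn)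
      (swapWitness_not_subseq X hσ hc (by omega) hpn)
end

section
/- For all non-negative integers n, q, t, s, p with q ≥ 1, t > s, s + p < n, (s, p) ≠ (0, 0), and every sequence x ∈ A_q^n with more than one run, the strict inequality |B_{t,s,p}(x)| > Σ_{i=0}^{t+p} C(n+t-s, i) (q-1)^i holds. -/
open Finset Fintype

def hammingVolume (q m r : ℕ) : ℕ := ∑ i ∈ range (r + 1), m.choose i * (q - 1) ^ i

lemma hammingVolume_succ_succ (q m r : ℕ) :
    hammingVolume q (m + 1) (r + 1) = hammingVolume q m (r + 1) + (q - 1) * hammingVolume q m r := by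
  have hshift : ∀ i, (q - 1) * (m.choose i * (q - 1) ^ i) = m.choose i * (q - 1) ^ (i + 1) :=
    fun i => by ring
  simp only [hammingVolume, sum_range_succ' _ (r + 1), Nat.choose_succ_succ, add_mul,
    sum_add_distrib, mul_sum, hshift, Nat.choose_zero_right]
  ring

lemma hammingVolume_of_le {q m r : ℕ} (hq : 1 ≤ q) (h : m ≤ r) : hammingVolume q m r = q ^ m := by
  have hsub : range (m + 1) ⊆ range (r + 1) := range_subset_range.2 (by omega)
  rw [hammingVolume, ← sum_subset hsub fun i _ hi => by
    rw [Nat.choose_eq_zero_of_lt (by simpa using hi), zero_mul]]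
  simpa [mul_comm, Nat.sub_add_cancel hq] using (add_pow (q - 1) 1 m).symm

lemma hammingVolume_add_pow_succ (q m : ℕ) :
    hammingVolume q (m + 1) m + (q - 1) ^ (m + 1) = hammingVolume q (m + 1) (m + 1) := by
  simp [hammingVolume, sum_range_succ _ (m + 1)]

section Hamming

variable {α ι ι' : Type*} [DecidableEq α] [Fintype ι] [Fintype ι']

lemma hammingDist_comp_equiv (u w : ι → α) (e : ι' ≃ ι) :
    hammingDist (u ∘ e) (w ∘ e) = hammingDist u w :=
  card_equiv e (by simp)

lemma hammingDist_fin_cons {n : ℕ} (c d : α) (u w : Fin n → α) :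
    hammingDist (Fin.cons c u : Fin (n + 1) → α) (Fin.cons d w) =
      (if c = d then 0 else 1) + hammingDist u w := by
  simp only [hammingDist, card_filter, Fin.sum_univ_succ, Fin.cons_zero, Fin.cons_succ, ne_eq,
    ite_not]

lemma hammingDist_le_pred_of_eq {n : ℕ} {u w : Fin n → α} {j : Fin n} (h : u j = w j) :
    hammingDist u w ≤ n - 1 := by
  have hsub : ({i | u i ≠ w i} : Finset (Fin n)) ⊆ univ.erase j := fun i hi =>
    mem_erase.2 ⟨by rintro rfl; simp_all, mem_univ i⟩
  simpa [hammingDist] using card_le_card hsub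

end Hamming

section SupersequenceBall

variable {α : Type*} [DecidableEq α] {n m r : ℕ}

def supersequenceBall (r : ℕ) {n m : ℕ} (x : Fin n → α) : Set (Fin m → α) :=
  {z | ∃ f : Fin n → Fin m, StrictMono f ∧ hammingDist (z ∘ f) x ≤ r}

@[simp]
lemma supersequenceBall_fin_zero (x : Fin 0 → α) :
    (supersequenceBall r x : Set (Fin m → α)) = Set.univ :=
  Set.eq_univ_of_forall fun _ => ⟨Fin.elim0, fun i => i.elim0, by simp [hammingDist]⟩

lemma cons_mem_supersequenceBall (c : α) {x : Fin n → α} {z : Fin m → α}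
    (hz : z ∈ supersequenceBall r x) :
    (Fin.cons c z : Fin (m + 1) → α) ∈ supersequenceBall r x := by
  obtain ⟨f, hf, hd⟩ := hz
  exact ⟨Fin.succ ∘ f, Fin.strictMono_succ.comp hf, by simpa [Function.comp_def] using hd⟩

lemma cons_mem_supersequenceBall_of_tail (c : α) {x : Fin (n + 1) → α} {z : Fin m → α}
    (hz : z ∈ supersequenceBall r (Fin.tail x)) :
    (Fin.cons c z : Fin (m + 1) → α) ∈
      supersequenceBall (r + if c = x 0 then 0 else 1) x := by
  obtain ⟨f, hf, hd⟩ := hz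
  refine ⟨Fin.cons 0 (Fin.succ ∘ f),
    Fin.strictMono_cons.2 ⟨fun j => Fin.succ_pos _, Fin.strictMono_succ.comp hf⟩, ?_⟩
  have hcomp : (Fin.cons c z : Fin (m + 1) → α) ∘ Fin.cons 0 (Fin.succ ∘ f) =
      Fin.cons c (z ∘ f) := by
    ext i; cases i using Fin.cases <;> rfl
  rw [hcomp, ← Fin.cons_self_tail x, hammingDist_fin_cons]
  simp only [Fin.cons_zero]
  omega

lemma comp_rev_mem_supersequenceBall {x : Fin n → α} {z : Fin m → α}
    (hz : z ∈ supersequenceBall r x) : z ∘ Fin.rev ∈ supersequenceBall r (x ∘ Fin.rev) := by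
  obtain ⟨f, hf, hd⟩ := hz
  refine ⟨Fin.rev ∘ f ∘ Fin.rev, fun i j hij => Fin.rev_lt_rev.2 (hf (Fin.rev_lt_rev.2 hij)), ?_⟩
  have := hammingDist_comp_equiv (z ∘ f) x Fin.revPerm
  simpa [Function.comp_def] using this.le.trans hd

lemma ncard_supersequenceBall_comp_rev (x : Fin n → α) :
    (supersequenceBall r (x ∘ Fin.rev) : Set (Fin m → α)).ncard =
      (supersequenceBall r x : Set (Fin m → α)).ncard := by
  refine Set.ncard_congr (fun z _ => z ∘ Fin.rev) ?_ ?_ ?_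
  · intro z hz
    simpa [Function.comp_def] using comp_rev_mem_supersequenceBall hz
  · intro a b _ _ hab
    simpa [Function.comp_def] using congrArg (· ∘ Fin.rev) hab
  · intro z hz
    exact ⟨z ∘ Fin.rev, comp_rev_mem_supersequenceBall hz, by ext; simp⟩

lemma mem_supersequenceBall_of_exists_eq {x : Fin (n + 1) → α} {z : Fin (n + 2) → α}
    (h : ∃ j, z j.castSucc = x j ∨ z j.succ = x j) : z ∈ supersequenceBall n x := by
  obtain ⟨j, hj | hj⟩ := h
  · exact ⟨Fin.castSucc, Fin.strictMono_castSucc, hammingDist_le_pred_of_eq hj⟩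
  · exact ⟨Fin.succ, Fin.strictMono_succ, hammingDist_le_pred_of_eq hj⟩

end SupersequenceBall

section Counting

variable {α : Type*} [Fintype α] {m : ℕ}

lemma ncard_eq_sum_ncard_cons (S : Set (Fin (m + 1) → α)) :
    S.ncard = ∑ c, {z : Fin m → α | (Fin.cons c z : Fin (m + 1) → α) ∈ S}.ncard := by
  simp only [← Nat.card_coe_set_eq]
  rw [← Nat.card_sigma]
  exact Nat.card_congr <| ((Fin.consEquiv fun _ => α).symm.subtypeEquiv fun z => by
    simp).trans (Equiv.subtypeProdEquivSigmaSubtype fun c z => (Fin.cons c z : Fin (m + 1) → α) ∈ S)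

lemma ncard_add_mul_ncard_le_of_cons_mem (S : Set (Fin (m + 1) → α)) {A C : Set (Fin m → α)}
    (a : α) (hA : ∀ z ∈ A, (Fin.cons a z : Fin (m + 1) → α) ∈ S)
    (hC : ∀ c ≠ a, ∀ z ∈ C, (Fin.cons c z : Fin (m + 1) → α) ∈ S) :
    A.ncard + (card α - 1) * C.ncard ≤ S.ncard := by
  classical
  rw [ncard_eq_sum_ncard_cons, ← add_sum_erase _ _ (mem_univ a)]
  apply add_le_add (Set.ncard_le_ncard hA)
  calc (card α - 1) * C.ncard = ∑ _c ∈ univ.erase a, C.ncard := by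
        simp [card_erase_of_mem]
    _ ≤ _ := sum_le_sum fun c hc => Set.ncard_le_ncard (hC c (ne_of_mem_erase hc))

variable [DecidableEq α] {n r : ℕ}

lemma ncard_supersequenceBall_tail_add_le (x : Fin (n + 1) → α) :
    (supersequenceBall r (Fin.tail x) : Set (Fin m → α)).ncard +
        (card α - 1) * (supersequenceBall r x : Set (Fin m → α)).ncard ≤
      (supersequenceBall r x : Set (Fin (m + 1) → α)).ncard :=
  ncard_add_mul_ncard_le_of_cons_mem _ (x 0)
    (fun z hz => by simpa using cons_mem_supersequenceBall_of_tail (x 0) hz)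
    (fun c _ z hz => cons_mem_supersequenceBall c hz)

end Counting

section Nonconstant

variable {α : Type*} {n : ℕ}

lemma exists_castSucc_ne_succ {x : Fin (n + 1) → α} (hx : ∃ i j, x i ≠ x j) :
    ∃ j : Fin n, x j.castSucc ≠ x j.succ := by
  by_contra! h
  obtain ⟨i, j, hij⟩ := hx
  have hconst : ∀ i, x i = x 0 := fun i => by
    induction i using Fin.induction with
    | zero => rfl
    | succ i ih => rw [← h i, ih]
  exact hij ((hconst i).trans (hconst j).symm)

lemma exists_succ_ne_succ_or_castSucc_ne_castSucc {x : Fin (n + 1) → α} (hn : 2 ≤ n)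
    (hx : ∃ i j, x i ≠ x j) :
    (∃ i j : Fin n, x i.succ ≠ x j.succ) ∨ ∃ i j : Fin n, x i.castSucc ≠ x j.castSucc := by
  by_contra! h
  obtain ⟨htail, hinit⟩ := h
  obtain ⟨i, j, hij⟩ := hx
  have hconst : ∀ i, x i = x 1 := fun i => by
    cases i using Fin.cases with
    | zero => convert hinit ⟨0, by omega⟩ ⟨1, by omega⟩ using 2 <;> ext <;> simp; omega
    | succ i => convert htail i ⟨0, by omega⟩ using 2; ext; simp; omega
  exact hij ((hconst i).trans (hconst j).symm)

end Nonconstant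

section Bounds

variable {α : Type*} [Fintype α] [DecidableEq α]

theorem hammingVolume_le_ncard_supersequenceBall [Nonempty α] :
    ∀ {m n r : ℕ} (x : Fin n → α), n ≤ m →
      hammingVolume (card α) m (m - n + r) ≤ (supersequenceBall r x : Set (Fin m → α)).ncard
  | m, 0, r, x, _ => by
    simp [hammingVolume_of_le Fintype.card_pos (show m ≤ m + r by omega)]
  | 0, _ + 1, _, _, h => by omega
  | m + 1, n + 1, r, x, h => by
    rcases (Nat.succ_le_succ_iff.1 h).lt_or_eq with h | rfl
    · rw [show m + 1 - (n + 1) + r = m - (n + 1) + r + 1 by omega, hammingVolume_succ_succ]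
      have htail := hammingVolume_le_ncard_supersequenceBall (r := r) (Fin.tail x) h.le
      rw [show m - n + r = m - (n + 1) + r + 1 by omega] at htail
      exact (add_le_add htail (Nat.mul_le_mul_left _
        (hammingVolume_le_ncard_supersequenceBall x h))).trans
        (ncard_supersequenceBall_tail_add_le x)
    · rcases r with _ | r
      · have hx : x ∈ (supersequenceBall 0 x : Set (Fin (n + 1) → α)) :=
          ⟨id, strictMono_id, by simp⟩
        simpa [hammingVolume, Nat.one_le_iff_ne_zero] using Set.ncard_ne_zero_of_mem hx
      · rw [Nat.sub_self, zero_add, hammingVolume_succ_succ]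
        have hA := hammingVolume_le_ncard_supersequenceBall (r := r + 1) (Fin.tail x) le_rfl
        have hC := hammingVolume_le_ncard_supersequenceBall (r := r) (Fin.tail x) le_rfl
        rw [Nat.sub_self, zero_add] at hA hC
        exact (add_le_add hA (Nat.mul_le_mul_left _ hC)).trans
          (ncard_add_mul_ncard_le_of_cons_mem _ (x 0)
            (fun z hz => by simpa using cons_mem_supersequenceBall_of_tail (x 0) hz)
            (fun c hc z hz => by simpa [hc] using cons_mem_supersequenceBall_of_tail c hz))

lemma card_piFinset_compl_le {ι : Type*} [Fintype ι] [DecidableEq ι] (F : ι → Finset α)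
    (hF : ∀ i, (F i).Nonempty) (i₀ : ι) (hi₀ : 1 < #(F i₀)) :
    #(piFinset fun i => (F i)ᶜ) ≤ (card α - 2) * (card α - 1) ^ (card ι - 1) := by
  rw [card_piFinset, ← mul_prod_erase univ (fun i => #(F i)ᶜ) (mem_univ i₀)]
  refine Nat.mul_le_mul (by rw [card_compl]; omega) ?_
  refine (prod_le_pow_card _ _ (card α - 1) fun i _ => ?_).trans_eq (by simp)
  rw [card_compl]
  have := (hF i).card_pos
  omega

theorem hammingVolume_lt_ncard_supersequenceBall_radius_pred {n : ℕ} {x : Fin (n + 1) → α}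
    (hx : ∃ i j, x i ≠ x j) :
    hammingVolume (card α) (n + 2) (n + 1) <
      (supersequenceBall n x : Set (Fin (n + 2) → α)).ncard := by
  set q := card α
  have hq : 2 ≤ q := Fintype.one_lt_card_iff.2 (by obtain ⟨i, j, h⟩ := hx; exact ⟨_, _, h⟩)
  set U : Set (Fin (n + 2) → α) := {z | ∃ j, z j.castSucc = x j ∨ z j.succ = x j}
  set aligned : Fin (n + 2) → Finset α := fun i => image x {j | j.castSucc = i ∨ j.succ = i}
  have hUc : Uᶜ ⊆ Fintype.piFinset fun i => (aligned i)ᶜ := by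
    intro z hz
    rw [mem_coe, Fintype.mem_piFinset]
    intro i
    simp only [aligned, mem_compl, mem_image, mem_filter, mem_univ, true_and, not_exists, not_and]
    rintro j (rfl | rfl) hj
    exacts [hz ⟨j, .inl hj.symm⟩, hz ⟨j, .inr hj.symm⟩]
  have haligned : ∀ i, (aligned i).Nonempty := fun i => by
    rcases Fin.eq_castSucc_or_eq_last i with ⟨j, rfl⟩ | rfl
    · exact ⟨x j, mem_image_of_mem x (mem_filter.2 ⟨mem_univ _, .inl rfl⟩)⟩
    · exact ⟨x (Fin.last n),
        mem_image_of_mem x (mem_filter.2 ⟨mem_univ _, .inr (Fin.succ_last n)⟩)⟩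
  obtain ⟨k, hk⟩ := exists_castSucc_ne_succ hx
  have haligned_two : 1 < #(aligned k.succ.castSucc) :=
    one_lt_card.2 ⟨_, mem_image_of_mem x (mem_filter.2 ⟨mem_univ _, .inr (Fin.succ_castSucc k)⟩),
      _, mem_image_of_mem x (mem_filter.2 ⟨mem_univ _, .inl rfl⟩), hk⟩
  have hUc_card : Uᶜ.ncard ≤ (q - 2) * (q - 1) ^ (n + 1) := by
    calc Uᶜ.ncard ≤ (Fintype.piFinset fun i => (aligned i)ᶜ : Set (Fin (n + 2) → α)).ncard :=
          Set.ncard_le_ncard hUc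
      _ = #(Fintype.piFinset fun i => (aligned i)ᶜ) := Set.ncard_coe_finset _
      _ ≤ (q - 2) * (q - 1) ^ (n + 1) :=
          (card_piFinset_compl_le aligned haligned _ haligned_two).trans_eq (by simp [q])
  have hsplit : (q - 1) ^ (n + 2) = (q - 2) * (q - 1) ^ (n + 1) + (q - 1) ^ (n + 1) := by
    rw [pow_succ' _ (n + 1), ← Nat.succ_mul]
    congr 1
    omega
  have hpos : 1 ≤ (q - 1) ^ (n + 1) := Nat.one_le_pow _ _ (by omega)
  have hV : hammingVolume q (n + 2) (n + 1) + (q - 1) ^ (n + 2) = q ^ (n + 2) := by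
    rw [hammingVolume_add_pow_succ, hammingVolume_of_le (by omega) le_rfl]
  have hU : U.ncard + Uᶜ.ncard = q ^ (n + 2) := by simpa [q] using Set.ncard_add_ncard_compl U
  calc hammingVolume q (n + 2) (n + 1) < U.ncard := by omega
    _ ≤ _ := Set.ncard_le_ncard fun z hz => mem_supersequenceBall_of_exists_eq hz

theorem hammingVolume_lt_ncard_supersequenceBall_succ :
    ∀ {n r : ℕ} (x : Fin n → α), (∃ i j, x i ≠ x j) → 1 ≤ r → r < n →
      hammingVolume (card α) (n + 1) (r + 1) <
        (supersequenceBall r x : Set (Fin (n + 1) → α)).ncard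
  | 0, _, _, _, _, hrn => by omega
  | n + 1, r, x, hx, hr, hrn => by
    have : Nonempty α := hx.elim fun i _ => ⟨x i⟩
    rcases (Nat.lt_succ_iff.1 hrn).eq_or_lt with rfl | hrn
    · exact hammingVolume_lt_ncard_supersequenceBall_radius_pred hx
    have key : ∀ y : Fin (n + 1) → α, (∃ i j, Fin.tail y i ≠ Fin.tail y j) →
        hammingVolume (card α) (n + 2) (r + 1) <
          (supersequenceBall r y : Set (Fin (n + 2) → α)).ncard := fun y hy => by
      have hC := hammingVolume_le_ncard_supersequenceBall (r := r) y le_rfl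
      rw [Nat.sub_self, zero_add] at hC
      rw [hammingVolume_succ_succ]
      exact (add_lt_add_of_lt_of_le
        (hammingVolume_lt_ncard_supersequenceBall_succ (Fin.tail y) hy hr hrn)
        (Nat.mul_le_mul_left _ hC)).trans_le (ncard_supersequenceBall_tail_add_le y)
    rcases exists_succ_ne_succ_or_castSucc_ne_castSucc (by omega) hx with hy | ⟨i, j, hij⟩
    · exact key x hy
    · rw [← ncard_supersequenceBall_comp_rev]
      exact key (x ∘ Fin.rev) ⟨i.rev, j.rev, by simpa [Fin.tail, Fin.rev_succ] using hij⟩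

theorem hammingVolume_lt_ncard_supersequenceBall {n m r : ℕ} (x : Fin n → α)
    (hx : ∃ i j, x i ≠ x j) (hr : 1 ≤ r) (hrn : r < n) (hnm : n < m) :
    hammingVolume (card α) m (m - n + r) < (supersequenceBall r x : Set (Fin m → α)).ncard := by
  obtain ⟨i, j, hij⟩ := hx
  have : Nonempty α := ⟨x i⟩
  have hq : 1 < card α := Fintype.one_lt_card_iff.2 ⟨_, _, hij⟩
  induction m, hnm using Nat.le_induction with
  | base =>
    rw [show n + 1 - n + r = r + 1 by omega]
    exact hammingVolume_lt_ncard_supersequenceBall_succ x ⟨i, j, hij⟩ hr hrn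
  | succ m hnm ih =>
    obtain ⟨n, rfl⟩ : ∃ n', n = n' + 1 := ⟨n - 1, by omega⟩
    have htail := hammingVolume_le_ncard_supersequenceBall (m := m) (r := r) (Fin.tail x) (by omega)
    rw [show m - n + r = m - (n + 1) + r + 1 by omega] at htail
    rw [show m + 1 - (n + 1) + r = m - (n + 1) + r + 1 by omega, hammingVolume_succ_succ]
    exact (add_lt_add_of_le_of_lt htail (Nat.mul_lt_mul_of_pos_left ih (by omega))).trans_le
      (ncard_supersequenceBall_tail_add_le x)

end Bounds

lemma Finset.exists_card_eq_card_sdiff_le {ι : Type*} [Fintype ι] [DecidableEq ι] (M : Finset ι)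
    {s : ℕ} (hs : s ≤ Fintype.card ι) : ∃ T : Finset ι, #T = s ∧ #(M \ T) ≤ #M - s := by
  obtain ⟨T₀, hT₀M, hT₀⟩ := exists_subset_card_eq (min_le_right s #M)
  obtain ⟨T, hT₀T, -, hT⟩ :=
    exists_subsuperset_card_eq (subset_univ T₀) (hT₀.trans_le (min_le_left _ _)) (by simpa)
  refine ⟨T, hT, ?_⟩
  calc #(M \ T) ≤ #(M \ T₀) := card_le_card (sdiff_subset_sdiff le_rfl hT₀T)
    _ = #M - min s #M := by rw [card_sdiff_of_subset hT₀M, hT₀]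
    _ ≤ #M - s := by omega

section Subsequence

variable {q n k : ℕ}

lemma subseqOf_image_s17 {m : ℕ} (z : Fin m → Fin q) {f : Fin n → Fin m} (hf : StrictMono f)
    (S : Finset (Fin n)) (h : #S = k) (h' : #(S.image f) = k) :
    subseqOf z (S.image f) h' = subseqOf (z ∘ f) S h := by
  have huniq := orderEmbOfFin_unique h' (f := fun i => f (S.orderEmbOfFin h i))
    (fun i => mem_image_of_mem f (orderEmbOfFin_mem S h i))
    (hf.comp (S.orderEmbOfFin h).strictMono)
  ext i
  simp [subseqOf, ← huniq]

lemma hammingDist_subseqOf_le (u w : Fin n → Fin q) (S : Finset (Fin n)) (h : #S = k) :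
    hammingDist (subseqOf u S h) (subseqOf w S h) ≤ #{i ∈ S | u i ≠ w i} :=
  card_le_card_of_injOn (fun i => S.orderEmbOfFin h i)
    (fun i hi => by simpa [subseqOf] using (mem_filter.1 (mem_coe.1 hi)).2)
    (S.orderEmbOfFin h).injective.injOn

lemma supersequenceBall_subset_idsBall {m s p : ℕ} (hs : s ≤ n) (x : Fin n → Fin q) :
    (supersequenceBall (s + p) x : Set (Fin m → Fin q)) ⊆ idsBall q s p x := by
  rintro z ⟨f, hf, hd⟩
  obtain ⟨T, hT, hMT⟩ :=
    exists_card_eq_card_sdiff_le {i | z (f i) ≠ x i} (s := s) (by simpa using hs)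
  have h1 : #Tᶜ = n - s := by rw [card_compl, hT, Fintype.card_fin]
  have h2 : #(Tᶜ.image f) = n - s := by rw [card_image_of_injective _ hf.injective, h1]
  refine ⟨Tᶜ, Tᶜ.image f, h1, h2, ?_⟩
  rw [subseqOf_image_s17 z hf Tᶜ h1 h2]
  have hM : #{i | z (f i) ≠ x i} ≤ s + p := hd
  calc _ ≤ #{i ∈ Tᶜ | x i ≠ (z ∘ f) i} := hammingDist_subseqOf_le _ _ _ _
    _ ≤ #(({i | z (f i) ≠ x i} : Finset (Fin n)) \ T) :=
      card_le_card fun i => by simp [eq_comm]; tauto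
    _ ≤ p := by omega

end Subsequence

theorem idsBall_t_gt_s_strict_general (n q t s p : ℕ) (hts : s < t)
    (hsp : s + p < n) (hsp0 : (s, p) ≠ (0, 0))
    (x : Fin n → Fin q) (hx : ∃ i j, x i ≠ x j) :
    (idsBall q s p x : Set (Fin (n + t - s) → Fin q)).ncard >
      ∑ i ∈ Finset.range (t + p + 1), (n + t - s).choose i * (q - 1) ^ i := by
  have hsp1 : 1 ≤ s + p := by
    by_contra h
    exact hsp0 (by simp only [Prod.mk.injEq]; omega)
  have hball := hammingVolume_lt_ncard_supersequenceBall (m := n + t - s) x hx hsp1 hsp (by omega)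
  rw [Fintype.card_fin, show n + t - s - n + (s + p) = t + p by omega] at hball
  exact hball.trans_le (Set.ncard_le_ncard (supersequenceBall_subset_idsBall (by omega) x))

/-- strict inequality for `B_{t,s,p}(x)` in the case `t > s`. -/
theorem idsBall_t_gt_s_strict (n q t s p : ℕ) (hq : 1 ≤ q) (hts : s < t)
    (hsp : s + p < n) (hsp0 : (s, p) ≠ (0, 0))
    (x : Fin n → Fin q) (hx : ∃ i j, x i ≠ x j) :
    (idsBall q s p x : Set (Fin (n + t - s) → Fin q)).ncard >
      ∑ i ∈ Finset.range (t + p + 1), (n + t - s).choose i * (q - 1) ^ i :=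
  idsBall_t_gt_s_strict_general n q t s p hts hsp hsp0 x hx
end
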